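/- The logics K4C_n form a strictly decreasing sequence: for every n ≥ 0, K4C_{n+1} ⊆ K4C_n and K4C_{n+1} ≠ K4C_n. -/

import Mathlib

/-!
Inclusion: over K4 each instance of `C_{n+1}` follows from an instance of `C_n`. Dropping the
last formula weakens the disjointness antecedent `D`, and by transitivity (`◇◇φ → ◇φ`) it also
weakens `P`, hence strengthens the consequent `◇(φ0 ∧ ¬P)`.

Strictness: on the universal frame with `n + 1` points, `n + 2` pairwise disjoint formulas cannot
all be satisfiable, so the frame validates `C_{n+1}` and hence all of K4C_{n+1}. The valuation
making point `i` the only `p_i`-point refutes the `C_n` instance on `p_0, …, p_n`.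
-/

/-- Modal formulas: variables, ⊤, ¬, ∧, □. -/
inductive Fml : Type
  | var : ℕ → Fml
  | top : Fml
  | neg : Fml → Fml
  | and : Fml → Fml → Fml
  | box : Fml → Fml
deriving DecidableEq

namespace Fml
/-- Material implication, defined from ¬ and ∧. -/
def imp (φ ψ : Fml) : Fml := .neg (.and φ (.neg ψ))
/-- Disjunction. -/
def or (φ ψ : Fml) : Fml := .neg (.and (.neg φ) (.neg ψ))
/-- ◇φ := ¬□¬φ. -/
def dia (φ : Fml) : Fml := .neg (.box (.neg φ))
/-- □*φ := φ ∧ □φ. -/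
def boxs (φ : Fml) : Fml := .and φ (.box φ)
/-- ◇*φ := φ ∨ ◇φ. -/
def dias (φ : Fml) : Fml := Fml.or φ (dia φ)
end Fml

/-- Kripke satisfaction. -/
def sat {W : Type} (R : W → W → Prop) (V : ℕ → Set W) : W → Fml → Prop
  | x, .var p => x ∈ V p
  | _, .top => True
  | x, .neg φ => ¬ sat R V x φ
  | x, .and φ ψ => sat R V x φ ∧ sat R V x ψ
  | x, .box φ => ∀ y, R x y → sat R V y φ

/-- P_n(φ0; φ1,...,φn): P_0(φ0) = ◇φ0, P_n(φ0,φ1,...,φn) = ◇(φ1 ∧ P_{n-1}(φ0,φ2,...,φn)). -/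
def Pfml (φ0 : Fml) : List Fml → Fml
  | [] => φ0.dia
  | ψ :: rest => (Fml.and ψ (Pfml φ0 rest)).dia

/-- Conjunction of ¬(φ ∧ ψ) for ψ in the list. -/
def conjNeg (φ : Fml) : List Fml → Fml
  | [] => .top
  | ψ :: rest => .and (.neg (.and φ ψ)) (conjNeg φ rest)

/-- D_n: pairwise disjointness conjunction ⋀_{i<j} ¬(φ_i ∧ φ_j). -/
def Dfml : List Fml → Fml
  | [] => .top
  | φ :: rest => .and (conjNeg φ rest) (Dfml rest)

/-- The scheme C_n instance on φ0,φ1,...,φn (φs = [φ1,...,φn]). -/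
def Cfml (φ0 : Fml) (φs : List Fml) : Fml :=
  ((Dfml (φ0 :: φs)).boxs).imp ((φ0.dia).imp ((Fml.and φ0 (Fml.neg (Pfml φ0 φs))).dia))

/-- The scheme C_n* instance: as C_n but with ◇* in the consequent. -/
def CfmlStar (φ0 : Fml) (φs : List Fml) : Fml :=
  ((Dfml (φ0 :: φs)).boxs).imp ((φ0.dia).imp ((Fml.and φ0 (Fml.neg (Pfml φ0 φs))).dias))

/-- An ascending R-chain. -/
def AscChain {W : Type} (R : W → W → Prop) (x : ℕ → W) : Prop := ∀ m, R (x m) (x (m+1))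

/-- A strictly ascending R-chain. -/
def StrictAscChain {W : Type} (R : W → W → Prop) (x : ℕ → W) : Prop :=
  AscChain R x ∧ ∀ m, ¬ R (x (m+1)) (x m)

/-- The R-cluster of x. -/
def cluster {W : Type} (R : W → W → Prop) (x : W) : Set W := {y | x = y ∨ (R x y ∧ R y x)}

/-- The frame has a cycle of length k (k ≥ 1): k distinct points x_0 R x_1 R ... R x_{k-1} R x_0. -/
def HasCycle {W : Type} (R : W → W → Prop) (k : ℕ) : Prop :=
  1 ≤ k ∧ ∃ x : ℕ → W, (∀ i j, i < k → j < k → x i = x j → i = j) ∧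
    ∀ i < k, R (x i) (x ((i+1) % k))

/-- Circumference at most n: every cycle has length ≤ n. -/
def CircumLE {W : Type} (R : W → W → Prop) (n : ℕ) : Prop := ∀ k, HasCycle R k → k ≤ n

/-- The frame (W,R) validates the scheme C_n. -/
def ValidatesCn {W : Type} (R : W → W → Prop) (n : ℕ) : Prop :=
  ∀ (V : ℕ → Set W) (x : W) (φ0 : Fml) (φs : List Fml), φs.length = n →
    sat R V x (Cfml φ0 φs)

/-- A Boolean valuation on formulas (box-formulas and variables as atoms). -/
def BoolEval (w : Fml → Bool) : Prop :=
  w .top = true ∧ (∀ φ, w (.neg φ) = !w φ) ∧ (∀ φ ψ, w (.and φ ψ) = (w φ && w ψ))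

/-- Propositional tautologies. -/
def Tautology (φ : Fml) : Prop := ∀ w, BoolEval w → w φ = true

/-- Theorems of the smallest normal modal logic containing the axiom set Ax. -/
inductive Prov (Ax : Set Fml) : Fml → Prop
  | taut {φ} : Tautology φ → Prov Ax φ
  | kax (φ ψ) : Prov Ax ((Fml.box (φ.imp ψ)).imp ((Fml.box φ).imp (Fml.box ψ)))
  | ax {φ} : φ ∈ Ax → Prov Ax φ
  | mp {φ ψ} : Prov Ax (φ.imp ψ) → Prov Ax φ → Prov Ax ψ
  | nec {φ} : Prov Ax φ → Prov Ax (.box φ)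

/-- All instances of the transitivity scheme 4. -/
def Ax4 : Set Fml := {χ | ∃ φ, χ = (Fml.box φ).imp (Fml.box (Fml.box φ))}

/-- Axioms of K4C_n: scheme 4 together with all instances of scheme C_n. -/
def AxK4C (n : ℕ) : Set Fml :=
  Ax4 ∪ {χ | ∃ (φ0 : Fml) (φs : List Fml), φs.length = n ∧ χ = Cfml φ0 φs}

namespace BoolEval

variable {w : Fml → Bool}

theorem neg_iff (hw : BoolEval w) (a : Fml) : w (.neg a) = true ↔ ¬ w a = true := by
  simp [hw.2.1]

theorem and_iff (hw : BoolEval w) (a b : Fml) :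
    w (.and a b) = true ↔ w a = true ∧ w b = true := by
  simp [hw.2.2]

theorem imp_iff (hw : BoolEval w) (a b : Fml) :
    w (a.imp b) = true ↔ (w a = true → w b = true) := by
  simp only [Fml.imp, hw.neg_iff, hw.and_iff]
  tauto

theorem conjNeg_iff (hw : BoolEval w) (a : Fml) :
    ∀ l : List Fml, w (conjNeg a l) = true ↔ ∀ b ∈ l, ¬ (w a = true ∧ w b = true)
  | [] => by simp [conjNeg, hw.1]
  | b :: l => by
    simp only [conjNeg, hw.and_iff, hw.neg_iff, hw.conjNeg_iff a l, List.forall_mem_cons]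

theorem Dfml_iff (hw : BoolEval w) :
    ∀ l : List Fml, w (Dfml l) = true ↔ l.Pairwise fun a b => ¬ (w a = true ∧ w b = true)
  | [] => by simp [Dfml, hw.1]
  | a :: l => by
    simp only [Dfml, hw.and_iff, hw.conjNeg_iff, hw.Dfml_iff l, List.pairwise_cons]

end BoolEval

namespace Prov

variable {Ax : Set Fml}

theorem taut_mp {a b : Fml} (h : ∀ w, BoolEval w → w a = true → w b = true)
    (ha : Prov Ax a) : Prov Ax b :=
  mp (taut fun w hw => (hw.imp_iff a b).2 (h w hw)) ha

theorem taut_mp₂ {a b c : Fml}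
    (h : ∀ w, BoolEval w → w a = true → w b = true → w c = true)
    (ha : Prov Ax a) (hb : Prov Ax b) : Prov Ax c :=
  mp (taut_mp (fun w hw ha => (hw.imp_iff b c).2 (h w hw ha)) ha) hb

theorem imp_trans {a b c : Fml} (hab : Prov Ax (a.imp b)) (hbc : Prov Ax (b.imp c)) :
    Prov Ax (a.imp c) :=
  taut_mp₂ (fun w hw => by simp only [hw.imp_iff]; tauto) hab hbc

theorem neg_imp_neg {a b : Fml} (h : Prov Ax (a.imp b)) : Prov Ax (b.neg.imp a.neg) :=
  taut_mp (fun w hw => by simp only [hw.imp_iff, hw.neg_iff]; tauto) h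

theorem box_mono {a b : Fml} (h : Prov Ax (a.imp b)) : Prov Ax (a.box.imp b.box) :=
  mp (kax a b) (nec h)

theorem dia_mono {a b : Fml} (h : Prov Ax (a.imp b)) : Prov Ax (a.dia.imp b.dia) :=
  neg_imp_neg (box_mono (neg_imp_neg h))

theorem boxs_mono {a b : Fml} (h : Prov Ax (a.imp b)) : Prov Ax (a.boxs.imp b.boxs) :=
  taut_mp₂ (fun w hw => by simp only [Fml.boxs, hw.imp_iff, hw.and_iff]; tauto) h (box_mono h)

theorem and_right_mono (c : Fml) {a b : Fml} (h : Prov Ax (a.imp b)) :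
    Prov Ax ((Fml.and c a).imp (Fml.and c b)) :=
  taut_mp (fun w hw => by simp only [hw.imp_iff, hw.and_iff]; tauto) h

theorem dia_dia_imp_dia (h4 : Ax4 ⊆ Ax) (a : Fml) : Prov Ax (a.dia.dia.imp a.dia) :=
  neg_imp_neg <| imp_trans (ax (h4 ⟨a.neg, rfl⟩)) <|
    box_mono <| taut fun w hw => by simp only [Fml.dia, hw.imp_iff, hw.neg_iff]; tauto

theorem Pfml_append_imp (h4 : Ax4 ⊆ Ax) (φ0 ψ : Fml) :
    ∀ l : List Fml, Prov Ax ((Pfml φ0 (l ++ [ψ])).imp (Pfml φ0 l))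
  | [] => imp_trans (dia_mono <| taut fun w hw => by simp only [hw.imp_iff, hw.and_iff]; tauto)
      (dia_dia_imp_dia h4 φ0)
  | χ :: l => dia_mono <| and_right_mono χ (Pfml_append_imp h4 φ0 ψ l)

theorem Cfml_append (h4 : Ax4 ⊆ Ax) {φ0 : Fml} {l : List Fml} (ψ : Fml)
    (h : Prov Ax (Cfml φ0 l)) : Prov Ax (Cfml φ0 (l ++ [ψ])) := by
  have hD : Prov Ax ((Dfml (φ0 :: (l ++ [ψ]))).imp (Dfml (φ0 :: l))) :=
    taut fun w hw => (hw.imp_iff _ _).2 fun h => (hw.Dfml_iff _).2 <|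
      ((hw.Dfml_iff _).1 h).sublist (by simp)
  have hP : Prov Ax ((Fml.and φ0 (Pfml φ0 l).neg).dia.imp
      (Fml.and φ0 (Pfml φ0 (l ++ [ψ])).neg).dia) :=
    dia_mono <| and_right_mono φ0 <| neg_imp_neg <| Pfml_append_imp h4 φ0 ψ l
  exact taut_mp₂ (fun w hw => by simp only [Cfml, hw.imp_iff]; tauto)
    (imp_trans (boxs_mono hD) h) hP

theorem mono_of_forall_ax {Ax' : Set Fml} (h : ∀ χ ∈ Ax, Prov Ax' χ) {φ : Fml}
    (hφ : Prov Ax φ) : Prov Ax' φ := by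
  induction hφ with
  | taut ht => exact taut ht
  | kax a b => exact kax a b
  | ax hχ => exact h _ hχ
  | mp _ _ ih₁ ih₂ => exact mp ih₁ ih₂
  | nec _ ih => exact nec ih

theorem of_K4C_succ (n : ℕ) {φ : Fml} (hφ : Prov (AxK4C (n + 1)) φ) : Prov (AxK4C n) φ := by
  refine mono_of_forall_ax (fun χ hχ => ?_) hφ
  have h4 : Ax4 ⊆ AxK4C n := Set.subset_union_left
  rcases hχ with h | ⟨φ0, φs, hlen, rfl⟩
  · exact ax (h4 h)
  · have hne : φs ≠ [] := List.ne_nil_of_length_eq_add_one hlen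
    rw [← List.dropLast_append_getLast hne] at hlen ⊢
    exact Cfml_append h4 _ (ax (Or.inr ⟨φ0, _, by simpa using hlen, rfl⟩))

end Prov

section Semantics

variable {W : Type} {R : W → W → Prop} {V : ℕ → Set W}

open Classical in
theorem boolEval_sat (x : W) : BoolEval fun φ => decide (sat R V x φ) := by
  refine ⟨decide_eq_true trivial, fun φ => ?_, fun φ ψ => ?_⟩
  · by_cases h : sat R V x φ <;> simp [sat, h]
  · by_cases hφ : sat R V x φ <;> by_cases hψ : sat R V x ψ <;> simp [sat, hφ, hψ]

theorem sat_imp {x : W} {a b : Fml} : sat R V x (a.imp b) ↔ (sat R V x a → sat R V x b) := by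
  simp only [Fml.imp, sat]
  tauto

theorem sat_dia {x : W} {a : Fml} : sat R V x a.dia ↔ ∃ y, R x y ∧ sat R V y a := by
  simp [Fml.dia, sat]

theorem sat_Dfml {x : W} {l : List Fml} :
    sat R V x (Dfml l) ↔ l.Pairwise fun a b => ¬ (sat R V x a ∧ sat R V x b) := by
  classical
  simpa using (boolEval_sat (R := R) (V := V) x).Dfml_iff l

theorem Prov.sound {Ax : Set Fml} (hAx : ∀ χ ∈ Ax, ∀ V x, sat R V x χ) {φ : Fml}
    (hφ : Prov Ax φ) (V : ℕ → Set W) (x : W) : sat R V x φ := by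
  induction hφ generalizing x with
  | taut ht => classical simpa using ht _ (boolEval_sat x)
  | kax a b => simp only [sat_imp, sat]; exact fun hab ha y hy => hab y hy (ha y hy)
  | ax hχ => exact hAx _ hχ V x
  | mp _ _ ih₁ ih₂ => exact sat_imp.1 (ih₁ x) (ih₂ x)
  | nec _ ih => exact fun y _ => ih y

theorem Prov.sound_K4C {n : ℕ} [IsTrans W R] (hC : ValidatesCn R n) {φ : Fml}
    (hφ : Prov (AxK4C n) φ) (V : ℕ → Set W) (x : W) : sat R V x φ := by
  refine Prov.sound (fun χ hχ V x => ?_) hφ V x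
  rcases hχ with ⟨a, rfl⟩ | ⟨φ0, φs, hlen, rfl⟩
  · exact sat_imp.2 fun h y hxy z hyz => h z (_root_.trans hxy hyz)
  · exact hC V x φ0 φs hlen

end Semantics

section Cluster

variable {W : Type} {V : ℕ → Set W}

theorem sat_Pfml_univ {z : W} {φ0 : Fml} :
    ∀ l : List Fml, sat (fun _ _ => True) V z (Pfml φ0 l) ↔
      (∃ v, sat (fun _ _ => True) V v φ0) ∧ ∀ ψ ∈ l, ∃ v, sat (fun _ _ => True) V v ψ
  | [] => by simp [Pfml, sat_dia]
  | ψ :: l => by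
    simp only [Pfml, sat_dia, sat, sat_Pfml_univ l, List.forall_mem_cons]
    tauto

theorem length_le_card_of_sat_Dfml [Fintype W] {R : W → W → Prop} {l : List Fml}
    (hD : ∀ x, sat R V x (Dfml l)) (hl : ∀ ψ ∈ l, ∃ v, sat R V v ψ) :
    l.length ≤ Fintype.card W := by
  have hnodup : (l.pmap (fun _ h => Exists.choose h) hl).Nodup := by
    rw [List.Nodup, List.pairwise_pmap, List.pairwise_iff_forall_sublist]
    intro a b hab ha hb heq
    have hdisj := List.pairwise_iff_forall_sublist.1 (sat_Dfml.1 (hD ha.choose)) hab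
    exact hdisj ⟨ha.choose_spec, heq ▸ hb.choose_spec⟩
  simpa using hnodup.length_le_card

theorem validatesCn_univ_of_card_le [Fintype W] {n : ℕ} (hcard : Fintype.card W ≤ n) :
    ValidatesCn (fun _ _ : W => True) n := by
  intro V x φ0 φs hlen
  rw [Cfml, sat_imp, sat_imp, sat_dia, sat_dia]
  rintro ⟨-, hD⟩ ⟨y, -, hy⟩
  refine ⟨y, trivial, hy, fun hP => ?_⟩
  have hlen_le := length_le_card_of_sat_Dfml (fun v => hD v trivial)
    (List.forall_mem_cons.2 ((sat_Pfml_univ φs).1 hP))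
  simp only [List.length_cons] at hlen_le
  omega

theorem not_validatesCn_univ_fin (n : ℕ) : ¬ ValidatesCn (fun _ _ : Fin (n + 1) => True) n := by
  intro hC
  let V : ℕ → Set (Fin (n + 1)) := fun p => {w | (w : ℕ) = p}
  have hvars : .var 0 :: (List.range' 1 n).map Fml.var = (List.range' 0 (n + 1)).map Fml.var := by
    simp [List.range'_succ]
  have hD : ∀ v, sat (fun _ _ => True) V v (Dfml ((List.range' 0 (n + 1)).map Fml.var)) :=
    fun v => sat_Dfml.2 <| List.pairwise_map.2 <|
      (List.nodup_range' ..).imp fun hab ⟨ha, hb⟩ => hab (ha.symm.trans hb)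
  have h := hC V 0 (.var 0) ((List.range' 1 n).map Fml.var) (by simp)
  rw [Cfml, hvars, sat_imp, sat_imp] at h
  obtain ⟨y, -, -, hP⟩ := sat_dia.1 (h ⟨hD 0, fun v _ => hD v⟩ (sat_dia.2 ⟨0, trivial, rfl⟩))
  refine hP ((sat_Pfml_univ _).2 ⟨⟨0, rfl⟩, ?_⟩)
  simp only [List.mem_map, List.mem_range'_1]
  rintro _ ⟨i, hi, rfl⟩
  exact ⟨⟨i, by omega⟩, rfl⟩

end Cluster

/-- the logics K4C_n form a strictly decreasing sequence. -/
theorem stmt12 (n : ℕ) :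
    {φ : Fml | Prov (AxK4C (n+1)) φ} ⊂ {φ : Fml | Prov (AxK4C n) φ} := by
  refine ssubset_of_subset_not_superset (fun φ => Prov.of_K4C_succ n) fun hsub => ?_
  have : IsTrans (Fin (n + 1)) fun _ _ => True := ⟨fun _ _ _ _ _ => trivial⟩
  refine not_validatesCn_univ_fin n fun V x φ0 φs hlen => ?_
  have hprov : Prov (AxK4C (n + 1)) (Cfml φ0 φs) := hsub (Prov.ax (Or.inr ⟨φ0, φs, hlen, rfl⟩))
  exact Prov.sound_K4C (validatesCn_univ_of_card_le (by simp)) hprov V x
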